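/- arXiv:2205.11442 — 3 statements merged into one kernel-verified Lean document; each statement's English description precedes it below -/
import Mathlib

section
/- Let z ∈ ℂ with |z| < 1 and |1-z| < 1, and let R = max(|z-1|/(2(1-|z|)), |z|/(2(1-|1-z|))). Then the closed ball B of radius R centered at 1/2 satisfies f(B) ⊆ B and g(B) ⊆ B, where f(x) = -z·x + z and g(x) = (z-1)·x + 1. -/
open Metric Set

theorem mapsTo_closedBall_of_norm_lt_one {𝕜 : Type*} [NonUnitalSeminormedRing 𝕜]
    {a : 𝕜} (b c : 𝕜) {r : ℝ} (ha : ‖a‖ < 1) (hr : ‖b - c‖ / (1 - ‖a‖) ≤ r) :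
    MapsTo (fun x => a * (x - c) + b) (closedBall c r) (closedBall c r) := by
  intro x hx
  rw [mem_closedBall, dist_eq_norm] at hx ⊢
  have hbc : ‖b - c‖ ≤ r * (1 - ‖a‖) := (div_le_iff₀ (sub_pos.mpr ha)).mp hr
  calc ‖a * (x - c) + b - c‖ = ‖a * (x - c) + (b - c)‖ := by rw [add_sub_assoc]
    _ ≤ ‖a‖ * ‖x - c‖ + ‖b - c‖ := (norm_add_le _ _).trans (by gcongr; exact norm_mul_le _ _)
    _ ≤ ‖a‖ * r + r * (1 - ‖a‖) := by gcongr
    _ = r := by ring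

theorem stmt_2 (z : ℂ) (hz : ‖z‖ < 1) (hz1 : ‖1 - z‖ < 1)
    (R : ℝ)
    (hR : R = max (‖z - 1‖ / (2 * (1 - ‖z‖)))
      (‖z‖ / (2 * (1 - ‖1 - z‖)))) :
    (fun x : ℂ => -z * x + z) '' Metric.closedBall (1/2 : ℂ) R ⊆ Metric.closedBall (1/2 : ℂ) R ∧
    (fun x : ℂ => (z - 1) * x + 1) '' Metric.closedBall (1/2 : ℂ) R ⊆ Metric.closedBall (1/2 : ℂ) R := by
  have hf : (fun x : ℂ => -z * x + z) = fun x => -z * (x - 1/2) + z / 2 := by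
    funext x; ring
  have hg : (fun x : ℂ => (z - 1) * x + 1) = fun x => (z - 1) * (x - 1/2) + (z + 1) / 2 := by
    funext x; ring
  constructor
  · rw [hf]
    refine (mapsTo_closedBall_of_norm_lt_one _ _ (by rwa [norm_neg]) ?_).image_subset
    rw [hR, ← sub_div, norm_div, norm_neg, Complex.norm_two, div_div]
    exact le_max_left _ _
  · rw [hg]
    refine (mapsTo_closedBall_of_norm_lt_one _ _ (by rwa [norm_sub_rev]) ?_).image_subset
    rw [hR, div_sub_div_same, add_sub_cancel_right, norm_div, norm_sub_rev, Complex.norm_two,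
      div_div]
    exact le_max_right _ _
end

section
/- Let z ∈ ℂ with |z - 1/2| < 1/2 and z not real. Then the attractor γ of the IFS {f(x) = -z·x + z, g(x) = (z-1)·x + 1} is not a convex set. -/
open MeasureTheory ENNReal Set Filter Topology

/-!
Since `f ∘ g` is the contraction `x ↦ z (1 - z) x`, the attractor `γ` contains its fixed point
`0`, hence also `g 0 = 1` and `f 0 = z`. A convex set containing the non-collinear points
`0, 1, z` has nonempty interior, so positive area. But `f` and `g` scale area by `|z|²` and
`|1 - z|²`, and `|z|² + |1 - z|² = 2 |z - 1/2|² + 1/2 < 1`, so the self-covering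
`γ ⊆ f(γ) ∪ g(γ)` forces `γ` to be null.
-/

lemma zero_mem_of_mapsTo_mul {R : Type*} [NormedRing R] {s : Set R} {c : R}
    (hs : IsClosed s) (hne : s.Nonempty) (hc : ‖c‖ < 1) (hmaps : MapsTo (c * ·) s s) :
    (0 : R) ∈ s := by
  obtain ⟨p, hp⟩ := hne
  have hmem : ∀ n : ℕ, c ^ n * p ∈ s := fun n => by
    simpa [mul_assoc] using hmaps.iterate n hp
  have : Tendsto (fun n : ℕ => c ^ n * p) atTop (𝓝 0) := by
    simpa using (tendsto_pow_atTop_nhds_zero_of_norm_lt_one hc).mul_const p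
  exact hs.mem_of_tendsto this (Eventually.of_forall hmem)

namespace Complex

lemma det_mulLeft (c : ℂ) : LinearMap.det (LinearMap.mulLeft ℝ c) = normSq c := by
  rw [← Algebra.norm_complex_apply, Algebra.norm_apply]
  rfl

lemma volume_image_mul_add (c w : ℂ) (s : Set ℂ) :
    volume ((fun x : ℂ => c * x + w) '' s) = ENNReal.ofReal (normSq c) * volume s := by
  have : (fun x : ℂ => c * x + w) '' s = (· + w) '' (LinearMap.mulLeft ℝ c '' s) := by
    rw [image_image]; rfl
  rw [this, image_add_right, measure_preimage_add_right, Measure.addHaar_image_linearMap,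
    det_mulLeft, abs_of_nonneg (normSq_nonneg c)]

lemma volume_eq_zero_of_subset_union_image {a b u v : ℂ} {s : Set ℂ} (hs : volume s ≠ ∞)
    (hab : normSq a + normSq b < 1)
    (hsub : s ⊆ (fun x => a * x + u) '' s ∪ (fun x => b * x + v) '' s) :
    volume s = 0 := by
  by_contra h
  have hle : 1 * volume s ≤ ENNReal.ofReal (normSq a + normSq b) * volume s := by
    calc 1 * volume s = volume s := one_mul _
      _ ≤ volume ((fun x => a * x + u) '' s) + volume ((fun x => b * x + v) '' s) :=
        (measure_mono hsub).trans (measure_union_le _ _)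
      _ = ENNReal.ofReal (normSq a + normSq b) * volume s := by
        rw [volume_image_mul_add, volume_image_mul_add, ← add_mul,
          ENNReal.ofReal_add (normSq_nonneg _) (normSq_nonneg _)]
  have := (ENNReal.mul_le_mul_iff_left h hs).1 hle
  rw [ENNReal.one_le_ofReal] at this
  linarith

lemma span_pair_one_eq_top {z : ℂ} (hz : z.im ≠ 0) : Submodule.span ℝ {1, z} = ⊤ := by
  refine eq_top_iff.2 fun w _ => ?_
  have hw : w = (w.re - w.im * z.re / z.im) • (1 : ℂ) + (w.im / z.im) • z := by
    apply Complex.ext <;> simp <;> field_simp; ring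
  rw [hw]
  exact Submodule.add_mem _ (Submodule.smul_mem _ _ (Submodule.subset_span (by simp)))
    (Submodule.smul_mem _ _ (Submodule.subset_span (by simp)))

lemma interior_nonempty_of_convex_of_zero_one_mem {s : Set ℂ} {z : ℂ} (hs : Convex ℝ s)
    (h0 : 0 ∈ s) (h1 : 1 ∈ s) (hz : z ∈ s) (him : z.im ≠ 0) : (interior s).Nonempty := by
  have htop : (affineSpan ℝ ({0, 1, z} : Set ℂ) : Set ℂ) = univ := by
    rw [show ({0, 1, z} : Set ℂ) = insert 0 {1, z} from rfl, affineSpan_insert_zero,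
      span_pair_one_eq_top him, Submodule.top_coe]
  refine hs.interior_nonempty_iff_affineSpan_eq_top.2 (eq_top_iff.2 fun w _ => ?_)
  have hsub : ({0, 1, z} : Set ℂ) ⊆ s := by rintro x (rfl | rfl | rfl) <;> assumption
  exact affineSpan_mono ℝ hsub (by rw [← SetLike.mem_coe, htop]; exact mem_univ w)

lemma normSq_add_normSq_sub_one_lt_one {z : ℂ} (hz : ‖z - 1 / 2‖ < 1 / 2) :
    normSq z + normSq (z - 1) < 1 := by
  have hsq : normSq (z - 1 / 2) < 1 / 4 := by
    rw [normSq_eq_norm_sq]; nlinarith [norm_nonneg (z - 1 / 2)]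
  have : normSq z + normSq (z - 1) = 2 * normSq (z - 1 / 2) + 1 / 2 := by
    simp only [normSq_apply, sub_re, sub_im, one_re, one_im, div_ofNat_re, div_ofNat_im]
    ring
  linarith

lemma norm_mul_one_sub_lt_one {z : ℂ} (hz : ‖z - 1 / 2‖ < 1 / 2) :
    ‖z * (1 - z)‖ < 1 := by
  have h₁ : ‖z‖ < 1 := by
    calc ‖z‖ ≤ ‖z - 1 / 2‖ + ‖(1 / 2 : ℂ)‖ := norm_le_norm_sub_add z _
      _ < 1 := by norm_num; linarith
  have h₂ : ‖1 - z‖ < 1 := by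
    calc ‖1 - z‖ = ‖(1 / 2 : ℂ) - (z - 1 / 2)‖ := by ring_nf
      _ ≤ ‖(1 / 2 : ℂ)‖ + ‖z - 1 / 2‖ := norm_sub_le _ _
      _ < 1 := by norm_num; linarith
  rw [norm_mul]
  exact mul_lt_one_of_nonneg_of_lt_one_left (norm_nonneg z) h₁ h₂.le

end Complex

theorem stmt_10 (z : ℂ) (hz : ‖z - 1/2‖ < 1/2) (him : z.im ≠ 0)
    (γ : Set ℂ) (hne : γ.Nonempty) (hc : IsCompact γ)
    (hγ : γ = (fun x : ℂ => -z * x + z) '' γ ∪ (fun x : ℂ => (z - 1) * x + 1) '' γ) :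
    ¬ Convex ℝ γ := by
  intro hconv
  have hf : MapsTo (fun x : ℂ => -z * x + z) γ γ := fun x hx => by
    rw [hγ]; exact subset_union_left (mem_image_of_mem _ hx)
  have hg : MapsTo (fun x : ℂ => (z - 1) * x + 1) γ γ := fun x hx => by
    rw [hγ]; exact subset_union_right (mem_image_of_mem _ hx)
  have h0 : (0 : ℂ) ∈ γ :=
    zero_mem_of_mapsTo_mul hc.isClosed hne (Complex.norm_mul_one_sub_lt_one hz)
      ((hf.comp hg).congr fun x _ => by simp only [Function.comp_apply]; ring)
  have h1 : (1 : ℂ) ∈ γ := by simpa using hg h0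
  have hzγ : z ∈ γ := by simpa using hf h0
  have hpos := Measure.measure_pos_of_nonempty_interior volume
    (Complex.interior_nonempty_of_convex_of_zero_one_mem hconv h0 h1 hzγ him)
  have hnull := Complex.volume_eq_zero_of_subset_union_image hc.measure_lt_top.ne
    (by simpa using Complex.normSq_add_normSq_sub_one_lt_one hz) hγ.subset
  exact hpos.ne' hnull
end

section
/- Let K and L be compact path-connected subsets of ℂ (identified with ℝ²). Suppose there exist continuous proper injective rays r⁺, r⁻ : [0,∞) → ℂ starting at points of K and s⁺, s⁻ : [0,∞) → ℂ starting at points of L, pairwise disjoint, such that r± are disjoint from L, s± are disjoint from K, and outside some large disk the four rays go to infinity in four directions with the r-directions separating the s-directions (linked at infinity). Then K ∩ L ≠ ∅. -/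
/-!
Join the rays `rm`, `rp` through `K` and the rays `sm`, `sp` through `L`, truncated at a radius
`M` beyond which they are straight: this gives two paths `γ`, `δ` in the closed disk of radius `M`
whose endpoints lie on its boundary circle at the interleaved angles `c, a` and `d, b`, and which
can only meet in `K ∩ L`. If they did not meet, `(s, t) ↦ γ s - δ t` would have a continuous
logarithm `Θ` on the square. On each side of the square one of the two paths is pinned at a point
of the circle, so `Im Θ` stays within `π / 2` of a fixed angle there, up to a multiple `2πk` that
is constant along the side. Comparing these four integers at the four corners is inconsistent.
-/

open Filter Set Complex Real

theorem Complex.exists_continuousMap_exp_eq {X : Type*} [TopologicalSpace X]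
    [SimplyConnectedSpace X] [LocallyPathConnectedSpace X] (f : C(X, ℂ)) (hf : ∀ x, f x ≠ 0) :
    ∃ θ : C(X, ℂ), ∀ x, exp (θ x) = f x := by
  obtain ⟨x₀⟩ := (inferInstance : Nonempty X)
  obtain ⟨θ, ⟨-, hθ⟩, -⟩ := isCoveringMapOn_exp.existsUnique_continuousMap_lifts f
    (exp_log (hf x₀)) hf
  exact ⟨θ, congrFun hθ⟩

theorem exists_int_forall_abs_im_sub_lt {X : Type*} [TopologicalSpace X] {S : Set X}
    (hS : IsPreconnected S) {θ : X → ℂ} (hθ : ContinuousOn θ S)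
    (hre : ∀ x ∈ S, 0 < (exp (θ x)).re) :
    ∃ k : ℤ, ∀ x ∈ S, |(θ x).im - 2 * π * k| < π / 2 := by
  have hmaps : MapsTo (fun x => θ x - log (exp (θ x))) S
      (AddSubgroup.zmultiples (2 * π * I) : Set ℂ) := by
    intro x _
    have h1 : exp (θ x - log (exp (θ x))) = 1 := by
      rw [Complex.exp_sub, exp_log (Complex.exp_ne_zero _), div_self (Complex.exp_ne_zero _)]
    obtain ⟨n, hn⟩ := Complex.exp_eq_one_iff.1 h1
    exact ⟨n, by simpa using hn.symm⟩
  obtain ⟨-, ⟨k, rfl⟩, hk⟩ := hS.eqOn_const_of_mapsTo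
    (SetLike.isDiscrete_iff_discreteTopology.2 inferInstance)
    (hθ.sub (hθ.cexp.clog fun x hx => Or.inl (hre x hx))) hmaps ⟨0, zero_mem _⟩
  refine ⟨k, fun x hx => ?_⟩
  have him : (θ x).im - 2 * π * k = arg (exp (θ x)) := by
    have := congrArg im (hk hx)
    simp only [sub_im, log_im, Pi.sub_apply, Function.const_apply, zsmul_eq_mul, mul_im,
      intCast_re, intCast_im, mul_re, re_ofNat, im_ofNat, ofReal_re, ofReal_im, I_re, I_im,
      mul_zero, mul_one, zero_mul, sub_zero, add_zero, sub_self] at this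
    linarith
  rw [him]
  exact abs_arg_lt_pi_div_two_iff.2 (Or.inl (hre x hx))

theorem re_mul_exp_neg_lt_of_norm_le {M φ : ℝ} {q : ℂ} (hq : ‖q‖ ≤ M)
    (hne : q ≠ M * exp (φ * I)) : (q * exp (-(φ * I))).re < M := by
  have hnorm : ‖q * exp (-(φ * I))‖ = ‖q‖ := by
    rw [norm_mul, ← neg_mul, ← ofReal_neg, norm_exp_ofReal_mul_I, mul_one]
  set w := q * exp (-(φ * I))
  have hle : w.re ≤ ‖w‖ := re_le_norm w
  refine (hle.trans (hnorm ▸ hq)).lt_of_ne fun heq => hne ?_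
  have hre : |w.re| = ‖w‖ := by rw [abs_of_nonneg (by linarith [norm_nonneg w])]; linarith
  have hM : w = M := Complex.ext (by simpa using heq) (by simpa using abs_re_eq_norm.1 hre)
  rw [← hM, mul_assoc, ← Complex.exp_add, neg_add_cancel, Complex.exp_zero, mul_one]

theorem exists_int_forall_abs_im_sub_lt_of_exp_eq {X : Type*} [TopologicalSpace X] {S : Set X}
    (hS : IsPreconnected S) {θ q : X → ℂ} (hθ : ContinuousOn θ S) {M φ : ℝ}
    (hq : ∀ x ∈ S, ‖q x‖ ≤ M ∧ q x ≠ M * exp (φ * I))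
    (hθq : ∀ x ∈ S, exp (θ x) = M * exp (φ * I) - q x) :
    ∃ k : ℤ, ∀ x ∈ S, |(θ x).im - φ - 2 * π * k| < π / 2 := by
  have hre : ∀ x ∈ S, 0 < (exp (θ x - φ * I)).re := by
    intro x hx
    have hlt := re_mul_exp_neg_lt_of_norm_le (hq x hx).1 (hq x hx).2
    rw [sub_eq_add_neg, Complex.exp_add, hθq x hx, sub_mul, mul_assoc, ← Complex.exp_add,
      add_neg_cancel, Complex.exp_zero, mul_one, sub_re, ofReal_re]
    linarith
  obtain ⟨k, hk⟩ := exists_int_forall_abs_im_sub_lt hS (hθ.sub continuousOn_const) hre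
  exact ⟨k, fun x hx => by simpa using hk x hx⟩

theorem sub_eq_of_abs_sub_two_pi_mul_lt {y φ ψ : ℝ} {k m n : ℤ}
    (hk : |y - φ - 2 * π * k| < π / 2) (hm : |y - ψ - 2 * π * m| < π / 2)
    (hn : |ψ - φ + 2 * π * n| < π) : m - k = n := by
  rw [abs_lt] at hk hm hn
  have hlo : ((n : ℝ) - 1) < m - k := by nlinarith [pi_pos]
  have hhi : (m : ℝ) - k < n + 1 := by nlinarith [pi_pos]
  have hlo' : n - 1 < m - k := by exact_mod_cast hlo
  have hhi' : m - k < n + 1 := by exact_mod_cast hhi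
  omega

theorem Path.exists_eq_of_interleaved {M a b c d : ℝ} {x₀ x₁ y₀ y₁ : ℂ}
    (γ : Path x₀ x₁) (δ : Path y₀ y₁) (hγ : ∀ s, ‖γ s‖ ≤ M) (hδ : ∀ t, ‖δ t‖ ≤ M)
    (hx₀ : x₀ = M * exp (c * I)) (hx₁ : x₁ = M * exp (a * I))
    (hy₀ : y₀ = M * exp (d * I)) (hy₁ : y₁ = M * exp (b * I))
    (hab : a < b) (hbc : b < c) (hcd : c < d) (hda : d < a + 2 * π) :
    ∃ s t, γ s = δ t := by
  subst hx₀ hx₁ hy₀ hy₁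
  by_contra! hne
  have hne' : ∀ s t, γ.extend s ≠ δ.extend t := fun s t => hne _ _
  have hγ' : ∀ s, ‖-γ.extend s‖ ≤ M := fun s => (norm_neg _).trans_le (hγ _)
  have hδ' : ∀ t, ‖δ.extend t‖ ≤ M := fun t => hδ _
  obtain ⟨Θ, hΘ⟩ := exists_continuousMap_exp_eq
    ⟨fun p : ℝ × ℝ => γ.extend p.1 - δ.extend p.2, by fun_prop⟩
    fun p => sub_ne_zero.2 (hne' p.1 p.2)
  have hexp_pi : ∀ φ : ℝ, M * exp ((φ + π : ℝ) * I) = -(M * exp (φ * I)) := fun φ => by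
    rw [ofReal_add, add_mul, Complex.exp_add, exp_pi_mul_I]; ring
  have hI := isPreconnected_Icc (a := (0:ℝ)) (b := 1)
  obtain ⟨k₁, hk₁⟩ := exists_int_forall_abs_im_sub_lt_of_exp_eq hI (φ := a)
    (θ := fun t => Θ (1, t)) (q := δ.extend) (by fun_prop)
    (fun t _ => ⟨hδ' t, fun h => hne' 1 t (γ.extend_one.trans h.symm)⟩)
    (fun t _ => by simp [hΘ])
  obtain ⟨k₃, hk₃⟩ := exists_int_forall_abs_im_sub_lt_of_exp_eq hI (φ := c)
    (θ := fun t => Θ (0, t)) (q := δ.extend) (by fun_prop)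
    (fun t _ => ⟨hδ' t, fun h => hne' 0 t (γ.extend_zero.trans h.symm)⟩)
    (fun t _ => by simp [hΘ])
  obtain ⟨k₂, hk₂⟩ := exists_int_forall_abs_im_sub_lt_of_exp_eq hI (φ := b + π)
    (θ := fun s => Θ (s, 1)) (q := fun s => -γ.extend s) (by fun_prop)
    (fun s _ => ⟨hγ' s, fun h => hne' s 1 <| by
      rw [δ.extend_one, neg_injective (h.trans (hexp_pi b))]⟩)
    (fun s _ => by rw [hexp_pi, hΘ]; simp; ring)
  obtain ⟨k₄, hk₄⟩ := exists_int_forall_abs_im_sub_lt_of_exp_eq hI (φ := d + π)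
    (θ := fun s => Θ (s, 0)) (q := fun s => -γ.extend s) (by fun_prop)
    (fun s _ => ⟨hγ' s, fun h => hne' s 0 <| by
      rw [δ.extend_zero, neg_injective (h.trans (hexp_pi d))]⟩)
    (fun s _ => by rw [hexp_pi, hΘ]; simp; ring)
  have h0 : (0:ℝ) ∈ Icc (0:ℝ) 1 := left_mem_Icc.2 zero_le_one
  have h1 : (1:ℝ) ∈ Icc (0:ℝ) 1 := right_mem_Icc.2 zero_le_one
  have e₁₁ := sub_eq_of_abs_sub_two_pi_mul_lt (n := -1) (hk₁ 1 h1) (hk₂ 1 h1)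
    (by rw [abs_lt]; push_cast; constructor <;> linarith)
  have e₁₀ := sub_eq_of_abs_sub_two_pi_mul_lt (n := -1) (hk₁ 0 h0) (hk₄ 1 h1)
    (by rw [abs_lt]; push_cast; constructor <;> linarith)
  have e₀₁ := sub_eq_of_abs_sub_two_pi_mul_lt (n := 0) (hk₃ 1 h1) (hk₂ 0 h0)
    (by rw [abs_lt]; push_cast; constructor <;> linarith)
  have e₀₀ := sub_eq_of_abs_sub_two_pi_mul_lt (n := -1) (hk₃ 0 h0) (hk₄ 0 h0)
    (by rw [abs_lt]; push_cast; constructor <;> linarith)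
  omega

theorem IsPathConnected.union_image_Icc {X : Type*} [TopologicalSpace X] {K : Set X}
    (hK : IsPathConnected K) {r : ℝ → X} (hr : Continuous r) {a b : ℝ} (hab : a ≤ b)
    (ha : r a ∈ K) : IsPathConnected (K ∪ r '' Icc a b) :=
  hK.union (((convex_Icc a b).isPathConnected (nonempty_Icc.2 hab)).image hr)
    ⟨r a, ha, mem_image_of_mem r (left_mem_Icc.2 hab)⟩

theorem image_Icc_subset_closedBall_of_eq_mul_exp {r : ℝ → ℂ} {T M φ : ℝ}
    (hr : r '' Icc 0 T ⊆ Metric.closedBall 0 M)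
    (hray : ∀ τ, T ≤ τ → r τ = τ * exp (φ * I)) : r '' Icc 0 M ⊆ Metric.closedBall 0 M := by
  rintro _ ⟨τ, hτ, rfl⟩
  rcases le_total τ T with hτT | hTτ
  · exact hr (mem_image_of_mem r ⟨hτ.1, hτT⟩)
  · rw [hray τ hTτ, mem_closedBall_zero_iff, norm_mul, norm_exp_ofReal_mul_I, mul_one,
      norm_real, Real.norm_of_nonneg hτ.1]
    exact hτ.2

theorem IsPathConnected.exists_path_through_rays {K : Set ℂ} (hK : IsPathConnected K)
    {r₁ r₂ : ℝ → ℂ} (hr₁ : Continuous r₁) (hr₂ : Continuous r₂) (h₁ : r₁ 0 ∈ K) (h₂ : r₂ 0 ∈ K)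
    {T M φ₁ φ₂ : ℝ} (hM : 0 ≤ M)
    (hball : K ∪ r₁ '' Icc 0 T ∪ r₂ '' Icc 0 T ⊆ Metric.closedBall 0 M)
    (hφ₁ : ∀ τ, T ≤ τ → r₁ τ = τ * exp (φ₁ * I)) (hφ₂ : ∀ τ, T ≤ τ → r₂ τ = τ * exp (φ₂ * I)) :
    ∃ γ : Path (r₁ M) (r₂ M), ∀ s, γ s ∈ K ∪ r₁ '' Ici 0 ∪ r₂ '' Ici 0 ∧ ‖γ s‖ ≤ M := by
  have hJ := ((hK.union_image_Icc hr₁ hM h₁).union_image_Icc hr₂ hM (Or.inl h₂)).joinedIn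
    _ (Or.inl (Or.inr (mem_image_of_mem r₁ (right_mem_Icc.2 hM))))
    _ (Or.inr (mem_image_of_mem r₂ (right_mem_Icc.2 hM)))
  have hIcc : ∀ r : ℝ → ℂ, r '' Icc 0 M ⊆ r '' Ici 0 := fun r => image_mono Icc_subset_Ici_self
  have hbound : K ∪ r₁ '' Icc 0 M ∪ r₂ '' Icc 0 M ⊆ Metric.closedBall 0 M :=
    union_subset (union_subset (subset_union_left.trans (subset_union_left.trans hball))
      (image_Icc_subset_closedBall_of_eq_mul_exp
        (subset_union_right.trans (subset_union_left.trans hball)) hφ₁))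
      (image_Icc_subset_closedBall_of_eq_mul_exp (subset_union_right.trans hball) hφ₂)
  refine ⟨hJ.somePath, fun s => ⟨?_, mem_closedBall_zero_iff.1 (hbound (hJ.somePath_mem s))⟩⟩
  exact union_subset_union (union_subset_union_right K (hIcc r₁)) (hIcc r₂) (hJ.somePath_mem s)

theorem stmt_15_general (K L : Set ℂ)
    (hKc : IsCompact K) (hKp : IsPathConnected K)
    (hLc : IsCompact L) (hLp : IsPathConnected L)
    (rp rm sp sm : ℝ → ℂ)
    (hrpc : Continuous rp) (hrmc : Continuous rm) (hspc : Continuous sp) (hsmc : Continuous sm)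
    (hrp0 : rp 0 ∈ K) (hrm0 : rm 0 ∈ K) (hsp0 : sp 0 ∈ L) (hsm0 : sm 0 ∈ L)
    (hd2 : rp '' Set.Ici 0 ∩ sp '' Set.Ici 0 = ∅)
    (hd3 : rp '' Set.Ici 0 ∩ sm '' Set.Ici 0 = ∅)
    (hd4 : rm '' Set.Ici 0 ∩ sp '' Set.Ici 0 = ∅)
    (hd5 : rm '' Set.Ici 0 ∩ sm '' Set.Ici 0 = ∅)
    (hrL1 : rp '' Set.Ici 0 ∩ L = ∅) (hrL2 : rm '' Set.Ici 0 ∩ L = ∅)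
    (hsK1 : sp '' Set.Ici 0 ∩ K = ∅) (hsK2 : sm '' Set.Ici 0 ∩ K = ∅)
    (hlink : ∃ T a b c d : ℝ, 0 < T ∧ a < b ∧ b < c ∧ c < d ∧ d < a + 2 * Real.pi ∧
      ∀ t : ℝ, T ≤ t →
        rp t = (t : ℂ) * Complex.exp (a * Complex.I) ∧
        sp t = (t : ℂ) * Complex.exp (b * Complex.I) ∧
        rm t = (t : ℂ) * Complex.exp (c * Complex.I) ∧
        sm t = (t : ℂ) * Complex.exp (d * Complex.I)) :
    (K ∩ L).Nonempty := by
  obtain ⟨T, a, b, c, d, hT, hab, hbc, hcd, hda, hray⟩ := hlink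
  have hI := isCompact_Icc (a := (0 : ℝ)) (b := T)
  obtain ⟨R, hR⟩ := (((hKc.union (hI.image hrmc)).union (hI.image hrpc)).union
    ((hLc.union (hI.image hsmc)).union (hI.image hspc))).isBounded.subset_closedBall 0
  have hball := hR.trans (Metric.closedBall_subset_closedBall (le_max_left R T))
  have hTM := le_max_right R T
  obtain ⟨γ, hγ⟩ := hKp.exists_path_through_rays hrmc hrpc hrm0 hrp0 (hT.le.trans hTM)
    (subset_union_left.trans hball) (fun τ hτ => (hray τ hτ).2.2.1) (fun τ hτ => (hray τ hτ).1)
  obtain ⟨δ, hδ⟩ := hLp.exists_path_through_rays hsmc hspc hsm0 hsp0 (hT.le.trans hTM)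
    (subset_union_right.trans hball) (fun τ hτ => (hray τ hτ).2.2.2) (fun τ hτ => (hray τ hτ).2.1)
  obtain ⟨s, t, hst⟩ := γ.exists_eq_of_interleaved δ (fun s => (hγ s).2) (fun t => (hδ t).2)
    (hray _ hTM).2.2.1 (hray _ hTM).1 (hray _ hTM).2.2.2 (hray _ hTM).2.1 hab hbc hcd hda
  have hcross : (K ∪ rm '' Ici 0 ∪ rp '' Ici 0) ∩ (L ∪ sm '' Ici 0 ∪ sp '' Ici 0) ⊆ K ∩ L := by
    simp only [union_inter_distrib_right, inter_union_distrib_left, hd2, hd3, hd4, hd5, hrL1,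
      hrL2, inter_comm K, hsK1, hsK2, union_empty, subset_refl]
  exact ⟨γ s, hcross ⟨(hγ s).1, hst ▸ (hδ t).1⟩⟩

theorem stmt_15 (K L : Set ℂ)
    (hKc : IsCompact K) (hKp : IsPathConnected K)
    (hLc : IsCompact L) (hLp : IsPathConnected L)
    (rp rm sp sm : ℝ → ℂ)
    (hrpc : Continuous rp) (hrmc : Continuous rm) (hspc : Continuous sp) (hsmc : Continuous sm)
    (hrpi : Set.InjOn rp (Set.Ici 0)) (hrmi : Set.InjOn rm (Set.Ici 0))
    (hspi : Set.InjOn sp (Set.Ici 0)) (hsmi : Set.InjOn sm (Set.Ici 0))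
    (hrp0 : rp 0 ∈ K) (hrm0 : rm 0 ∈ K) (hsp0 : sp 0 ∈ L) (hsm0 : sm 0 ∈ L)
    (hrpP : Tendsto (fun t => ‖rp t‖) atTop atTop)
    (hrmP : Tendsto (fun t => ‖rm t‖) atTop atTop)
    (hspP : Tendsto (fun t => ‖sp t‖) atTop atTop)
    (hsmP : Tendsto (fun t => ‖sm t‖) atTop atTop)
    (hd1 : rp '' Set.Ici 0 ∩ rm '' Set.Ici 0 = ∅)
    (hd2 : rp '' Set.Ici 0 ∩ sp '' Set.Ici 0 = ∅)
    (hd3 : rp '' Set.Ici 0 ∩ sm '' Set.Ici 0 = ∅)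
    (hd4 : rm '' Set.Ici 0 ∩ sp '' Set.Ici 0 = ∅)
    (hd5 : rm '' Set.Ici 0 ∩ sm '' Set.Ici 0 = ∅)
    (hd6 : sp '' Set.Ici 0 ∩ sm '' Set.Ici 0 = ∅)
    (hrL1 : rp '' Set.Ici 0 ∩ L = ∅) (hrL2 : rm '' Set.Ici 0 ∩ L = ∅)
    (hsK1 : sp '' Set.Ici 0 ∩ K = ∅) (hsK2 : sm '' Set.Ici 0 ∩ K = ∅)
    (hlink : ∃ T a b c d : ℝ, 0 < T ∧ a < b ∧ b < c ∧ c < d ∧ d < a + 2 * Real.pi ∧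
      ∀ t : ℝ, T ≤ t →
        rp t = (t : ℂ) * Complex.exp (a * Complex.I) ∧
        sp t = (t : ℂ) * Complex.exp (b * Complex.I) ∧
        rm t = (t : ℂ) * Complex.exp (c * Complex.I) ∧
        sm t = (t : ℂ) * Complex.exp (d * Complex.I)) :
    (K ∩ L).Nonempty :=
  stmt_15_general K L hKc hKp hLc hLp rp rm sp sm hrpc hrmc hspc hsmc hrp0 hrm0 hsp0 hsm0 hd2 hd3
    hd4 hd5 hrL1 hrL2 hsK1 hsK2 hlink
end
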